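/- For vectors p_U, p_U⁽ᶻ⁾, p_A, p_k ∈ ℝ² and height H > 0, defining d_A(p)² = ‖p - p_A‖² + H² and d_k(p)² = ‖p - p_k‖² + H², the product d_A(p_U)² d_k(p_U)² is at most (1/2)(d_A(p_U)² + d_k(p_U)²)² - (1/2)(d_A(p_U⁽ᶻ⁾)⁴ + d_k(p_U⁽ᶻ⁾)⁴) - 2 d_A(p_U⁽ᶻ⁾)² ⟨p_U⁽ᶻ⁾ - p_A, p_U - p_U⁽ᶻ⁾⟩ - 2 d_k(p_U⁽ᶻ⁾)² ⟨p_U⁽ᶻ⁾ - p_k, p_U - p_U⁽ᶻ⁾⟩. -/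
import Mathlib



open scoped RealInnerProductSpace
theorem distance_product_sca_upper_bound
    (pU pUz pA pk : EuclideanSpace ℝ (Fin 2)) (H : ℝ) (hH : 0 < H) :
    (‖pU - pA‖^2 + H^2) * (‖pU - pk‖^2 + H^2)
    ≤ (1/2) * ((‖pU - pA‖^2 + H^2) + (‖pU - pk‖^2 + H^2))^2
      - (1/2) * ((‖pUz - pA‖^2 + H^2)^2 + (‖pUz - pk‖^2 + H^2)^2)
      - 2 * (‖pUz - pA‖^2 + H^2) * ⟪pUz - pA, pU - pUz⟫
      - 2 * (‖pUz - pk‖^2 + H^2) * ⟪pUz - pk, pU - pUz⟫ := by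
  have hA : ‖pU - pA‖^2 = ‖pUz - pA‖^2 + 2 * ⟪pUz - pA, pU - pUz⟫ + ‖pU - pUz‖^2 := by
    have h : pU - pA = (pUz - pA) + (pU - pUz) := by abel
    rw [h, norm_add_sq_real]
  have hk : ‖pU - pk‖^2 = ‖pUz - pk‖^2 + 2 * ⟪pUz - pk, pU - pUz⟫ + ‖pU - pUz‖^2 := by
    have h : pU - pk = (pUz - pk) + (pU - pUz) := by abel
    rw [h, norm_add_sq_real]
  nlinarith [sq_nonneg (‖pU - pA‖^2 + H^2 - (‖pUz - pA‖^2 + H^2)),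
    sq_nonneg (‖pU - pk‖^2 + H^2 - (‖pUz - pk‖^2 + H^2)),
    sq_nonneg (‖pU - pUz‖), sq_nonneg H,
    mul_nonneg (sq_nonneg ‖pU - pUz‖) (add_nonneg (sq_nonneg ‖pUz - pA‖) (sq_nonneg H)),
    mul_nonneg (sq_nonneg ‖pU - pUz‖) (add_nonneg (sq_nonneg ‖pUz - pk‖) (sq_nonneg H))]
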